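/- Let ζ be a standard exponential random variable, λ : [0,∞) → [0,∞) integrable, κ ≥ 0, u > 0, and define K(t) = ∫_0^t λ(s) ds + κ·1{t ≥ u}. Let τ = inf{t ≥ 0 : K(t) ≥ ζ}. Then P(τ = u) = e^{−∫_0^u λ(s) ds} (1 − e^{−κ}). -/

import Mathlib

open MeasureTheory ProbabilityTheory Real Set

/-- Standard normal cumulative distribution function. -/
noncomputable def stdCDF (x : ℝ) : ℝ := ((gaussianReal 0 1) (Set.Iic x)).toReal

/-- Standard normal density. -/
noncomputable def stdPDF (x : ℝ) : ℝ := gaussianPDFReal 0 1 x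

/-- `W` is a standard one-dimensional Brownian motion (started at 0) under `P`. -/
structure IsStdBM {Ω : Type*} [MeasurableSpace Ω] (P : Measure Ω) (W : ℝ → Ω → ℝ) : Prop where
  meas : ∀ t, Measurable (W t)
  start : ∀ ω, W 0 ω = 0
  cont : ∀ ω, Continuous fun t => W t ω
  incr_law : ∀ s t : ℝ, 0 ≤ s → s ≤ t →
    Measure.map (fun ω => W t ω - W s ω) P = gaussianReal 0 ((t - s).toNNReal)
  indep_incr : ∀ (n : ℕ) (t : Fin (n + 1) → ℝ), Monotone t → (∀ i, 0 ≤ t i) →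
    iIndepFun
      (fun i : Fin n => fun ω => W (t i.succ) ω - W (t i.castSucc) ω) P

/-- Natural filtration of a process `W`. -/
def natFiltration {Ω : Type*} [m0 : MeasurableSpace Ω] (W : ℝ → Ω → ℝ)
    (hW : ∀ t, Measurable (W t)) : Filtration ℝ m0 where
  seq t := ⨆ s ∈ Set.Icc (0 : ℝ) t, MeasurableSpace.comap (W s) inferInstance
  mono' s t hst := biSup_mono fun u hu => ⟨hu.1, hu.2.trans hst⟩
  le' t := iSup₂_le fun s _ => (hW s).comap_le

/-! Write `a = ∫₀ᵘ λ` for the left limit of `K` at `u` and `b = a + κ` for its value there. Since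
`K` is nondecreasing and continuous away from its jump, the level `ζ` is first reached at `u`
exactly when `a < ζ ≤ b`, up to the boundary case `ζ = a`. That case is null because the
exponential survival function is continuous, so `P(τ = u) = e^{-a} - e^{-b}`. -/

theorem monotone_primitive_of_nonneg {f : ℝ → ℝ} {μ : Measure ℝ} (a : ℝ)
    (hf : ∀ b c, IntervalIntegrable f μ b c) (hf0 : ∀ x, 0 ≤ f x) :
    Monotone fun b => ∫ x in a..b, f x ∂μ := by
  intro b c hbc
  have hsplit := intervalIntegral.integral_interval_sub_left (hf a c) (hf a b)
  have hnonneg : 0 ≤ ∫ x in b..c, f x ∂μ := intervalIntegral.integral_nonneg hbc fun x _ => hf0 x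
  dsimp only
  linarith

section HittingTime

variable {A : ℝ → ℝ} {κ u z : ℝ}

theorem sInf_hitting_eq_of_mem_Ioc (hA : Monotone A) (hu : 0 ≤ u) (hz : z ∈ Ioc (A u) (A u + κ)) :
    sInf {t | 0 ≤ t ∧ z ≤ A t + if u ≤ t then κ else 0} = u := by
  refine IsLeast.csInf_eq ⟨⟨hu, by simpa using hz.2⟩, fun t ⟨_, ht⟩ => ?_⟩
  by_contra! htu
  rw [if_neg htu.not_ge, add_zero] at ht
  exact (hz.1.trans_le ht).not_ge (hA htu.le)

theorem mem_Icc_of_sInf_hitting_eq (hA : Continuous A) (hu : 0 < u)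
    (h : sInf {t | 0 ≤ t ∧ z ≤ A t + if u ≤ t then κ else 0} = u) :
    z ∈ Icc (A u) (A u + κ) := by
  set S := {t | 0 ≤ t ∧ z ≤ A t + if u ≤ t then κ else 0}
  have hbdd : BddBelow S := ⟨0, fun t ht => ht.1⟩
  have hne : S.Nonempty := by
    by_contra! hS
    rw [hS, Real.sInf_empty] at h
    exact hu.ne h
  have hle : ∀ t ∈ S, u ≤ t := fun t ht => h ▸ csInf_le hbdd ht
  constructor
  · have hIco : Ico 0 u ⊆ {t | A t ≤ z} := fun t ⟨ht0, htu⟩ => not_lt.mp fun hzt : z < A t =>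
      htu.not_ge (hle t ⟨ht0, by simpa [htu.not_ge] using hzt.le⟩)
    have hclosed := (isClosed_le hA continuous_const).closure_subset_iff.mpr hIco
    rw [closure_Ico hu.ne] at hclosed
    exact hclosed (right_mem_Icc.mpr hu.le)
  · have hS : S ⊆ {t | z ≤ A t + κ} := fun t ht => by
      simpa [hle t ht] using ht.2
    have hclosed :=
      (isClosed_le continuous_const (hA.add continuous_const)).closure_subset_iff.mpr hS
    exact hclosed (h ▸ csInf_mem_closure hne hbdd)

end HittingTime

section ExponentialSurvival

variable {Ω : Type*} [MeasurableSpace Ω] {P : Measure Ω} [IsProbabilityMeasure P] {ζ : Ω → ℝ}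
  {a b : ℝ}

theorem measureReal_preimage_Ioc_of_exp_survival (hζm : Measurable ζ)
    (hζ : ∀ x : ℝ, 0 ≤ x → (P {ω | x < ζ ω}).toReal = exp (-x)) (ha : 0 ≤ a) (hab : a ≤ b) :
    P.real (ζ ⁻¹' Ioc a b) = exp (-a) - exp (-b) := by
  have hdiff : ζ ⁻¹' Ioc a b = ζ ⁻¹' Ioi a \ ζ ⁻¹' Ioi b := by
    ext ω
    simp [and_comm]
  rw [hdiff, measureReal_sdiff (preimage_mono (Ioi_subset_Ioi hab)) (hζm measurableSet_Ioi)]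
  exact congrArg₂ _ (hζ a ha) (hζ b (ha.trans hab))

theorem measure_preimage_singleton_of_exp_survival (hζm : Measurable ζ)
    (hζ : ∀ x : ℝ, 0 ≤ x → (P {ω | x < ζ ω}).toReal = exp (-x)) (ha : 0 ≤ a) :
    P (ζ ⁻¹' {a}) = 0 := by
  rcases ha.eq_or_lt with rfl | ha
  · have hpos : P {ω | 0 < ζ ω} = 1 := by
      rw [← ENNReal.toReal_eq_one_iff, hζ 0 le_rfl, neg_zero, exp_zero]
    refine measure_mono_null (fun ω (hω : ζ ω = 0) => ?_)
      ((prob_compl_eq_zero_iff (hζm measurableSet_Ioi)).mpr hpos)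
    simp [hω]
  · -- `P(ζ = a) ≤ P(x < ζ ≤ a) = e^{-x} - e^{-a}` for `x < a`, which tends to `0` as `x → a`.
    have hbound : ∀ᶠ x in nhdsWithin a (Iio a), P.real (ζ ⁻¹' {a}) ≤ exp (-x) - exp (-a) := by
      filter_upwards [Ioo_mem_nhdsLT ha] with x hx
      rw [← measureReal_preimage_Ioc_of_exp_survival hζm hζ hx.1.le hx.2.le]
      exact measureReal_mono (preimage_mono (singleton_subset_iff.mpr ⟨hx.2, le_rfl⟩))
    have hlim : Filter.Tendsto (fun x => exp (-x) - exp (-a)) (nhdsWithin a (Iio a))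
        (nhds (exp (-a) - exp (-a))) :=
      ((continuous_exp.comp continuous_neg).sub continuous_const).continuousWithinAt
    have hzero : P.real (ζ ⁻¹' {a}) ≤ 0 := by
      simpa using ge_of_tendsto hlim hbound
    exact (measureReal_eq_zero_iff).mp (hzero.antisymm measureReal_nonneg)

end ExponentialSurvival

theorem stmt4_general {Ω : Type*} [MeasurableSpace Ω] {P : Measure Ω} [IsProbabilityMeasure P]
    (ζ : Ω → ℝ) (hζm : Measurable ζ)
    (hζ : ∀ x : ℝ, 0 ≤ x → (P {ω | x < ζ ω}).toReal = Real.exp (-x))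
    (lam : ℝ → ℝ) (hlnn : ∀ s, 0 ≤ lam s)
    (hli : ∀ t : ℝ, IntervalIntegrable lam MeasureTheory.volume 0 t)
    (κ u : ℝ) (hκ : 0 ≤ κ) (hu : 0 < u)
    (K : ℝ → ℝ) (hK : ∀ t, K t = (∫ s in (0 : ℝ)..t, lam s) + (if u ≤ t then κ else 0))
    (τ : Ω → ℝ) (hτ : ∀ ω, τ ω = sInf {t : ℝ | 0 ≤ t ∧ ζ ω ≤ K t}) :
    (P {ω | τ ω = u}).toReal
      = Real.exp (-(∫ s in (0 : ℝ)..u, lam s)) * (1 - Real.exp (-κ)) := by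
  simp only [hK] at hτ
  set A : ℝ → ℝ := fun t => ∫ s in (0 : ℝ)..t, lam s
  have hint : ∀ s t : ℝ, IntervalIntegrable lam volume s t := fun s t => (hli s).symm.trans (hli t)
  have hA_mono : Monotone A := monotone_primitive_of_nonneg 0 hint hlnn
  have hA_cont : Continuous A := intervalIntegral.continuous_primitive hint 0
  have hA_nonneg : 0 ≤ A u := by simpa [A] using hA_mono hu.le
  have hsub : ζ ⁻¹' Ioc (A u) (A u + κ) ⊆ {ω | τ ω = u} := fun ω hω =>
    (hτ ω).trans (sInf_hitting_eq_of_mem_Ioc hA_mono hu.le hω)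
  have hsup : {ω | τ ω = u} ⊆ ζ ⁻¹' Ioc (A u) (A u + κ) ∪ ζ ⁻¹' {A u} := fun ω hω => by
    obtain ⟨h₁, h₂⟩ := mem_Icc_of_sInf_hitting_eq hA_cont hu ((hτ ω).symm.trans hω)
    rcases h₁.lt_or_eq with h | h
    exacts [Or.inl ⟨h, h₂⟩, Or.inr h.symm]
  have hnull := measure_preimage_singleton_of_exp_survival hζm hζ hA_nonneg
  have hτ_eq : P {ω | τ ω = u} = P (ζ ⁻¹' Ioc (A u) (A u + κ)) :=
    le_antisymm (calc
      P {ω | τ ω = u} ≤ P (ζ ⁻¹' Ioc (A u) (A u + κ) ∪ ζ ⁻¹' {A u}) := measure_mono hsup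
      _ ≤ P (ζ ⁻¹' Ioc (A u) (A u + κ)) + P (ζ ⁻¹' {A u}) := measure_union_le _ _
      _ = P (ζ ⁻¹' Ioc (A u) (A u + κ)) := by rw [hnull, add_zero])
      (measure_mono hsub)
  rw [hτ_eq, ← measureReal_def,
    measureReal_preimage_Ioc_of_exp_survival hζm hζ hA_nonneg (le_add_of_nonneg_right hκ),
    neg_add, exp_add]
  ring

/-- For `K(t) = ∫_0^t λ(s) ds + κ·1{t ≥ u}` and `τ = inf{t ≥ 0 : K(t) ≥ ζ}` with `ζ`
standard exponential, `P(τ = u) = e^{-∫_0^u λ(s) ds}(1 - e^{-κ})`. -/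
theorem stmt4 {Ω : Type*} [MeasurableSpace Ω] {P : Measure Ω} [IsProbabilityMeasure P]
    (ζ : Ω → ℝ) (hζm : Measurable ζ)
    (hζ : ∀ x : ℝ, 0 ≤ x → (P {ω | x < ζ ω}).toReal = Real.exp (-x))
    (lam : ℝ → ℝ) (hlm : Measurable lam) (hlnn : ∀ s, 0 ≤ lam s)
    (hli : ∀ t : ℝ, IntervalIntegrable lam MeasureTheory.volume 0 t)
    (κ u : ℝ) (hκ : 0 ≤ κ) (hu : 0 < u)
    (K : ℝ → ℝ) (hK : ∀ t, K t = (∫ s in (0 : ℝ)..t, lam s) + (if u ≤ t then κ else 0))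
    (τ : Ω → ℝ) (hτ : ∀ ω, τ ω = sInf {t : ℝ | 0 ≤ t ∧ ζ ω ≤ K t}) :
    (P {ω | τ ω = u}).toReal
      = Real.exp (-(∫ s in (0 : ℝ)..u, lam s)) * (1 - Real.exp (-κ)) :=
  stmt4_general ζ hζm hζ lam hlnn hli κ u hκ hu K hK τ hτ
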